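/- arXiv:1501.07108 — 4 statements merged into one kernel-verified Lean document; each statement's English description precedes it below -/
import Mathlib

section
/- If words W1 and W2 cover sets A and B of non-edges of an acyclic digraph D respectively, then the concatenation W = W1W2 covers the set A ∪ B. -/
variable {V : Type*}

/-- Letters `x` and `y` alternate in the word `W`: the subword induced by the two
letters has no two equal consecutive letters. -/
def Alternate [DecidableEq V] (W : List V) (x y : V) : Prop :=
  (W.filter (fun z => z = x ∨ z = y)).Chain' (· ≠ ·)

/-- A word is `k`-uniform if every letter of the alphabet occurs exactly `k` times. -/
def Uniform [DecidableEq V] (W : List V) (k : ℕ) : Prop :=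
  ∀ x : V, W.count x = k

/-- A word `W` represents the graph `G`: every vertex occurs in `W` and two distinct
vertices are adjacent iff they alternate in `W`. -/
def Represents [DecidableEq V] (W : List V) (G : SimpleGraph V) : Prop :=
  (∀ x : V, x ∈ W) ∧ ∀ x y : V, x ≠ y → (G.Adj x y ↔ Alternate W x y)

def WordRepresentable [DecidableEq V] (G : SimpleGraph V) : Prop :=
  ∃ W : List V, Represents W G

def KWordRepresentable [DecidableEq V] (G : SimpleGraph V) (k : ℕ) : Prop :=
  ∃ W : List V, Uniform W k ∧ Represents W G

/-- A digraph (relation) is acyclic if it has no directed cycle. -/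
def Acyclic (E : V → V → Prop) : Prop :=
  ∀ x : V, ¬ Relation.TransGen E x x

/-- A digraph is semi-transitive if it is acyclic and for every directed path
`v 0 → v 1 → ⋯ → v k` such that the arc `v 0 → v k` is present, all arcs
`v i → v j` for `i < j` are present. -/
def SemiTransitive (E : V → V → Prop) : Prop :=
  Acyclic E ∧ ∀ (k : ℕ) (v : Fin (k + 1) → V),
    (∀ i : Fin k, E (v i.castSucc) (v i.succ)) →
    E (v 0) (v (Fin.last k)) →
    ∀ i j : Fin (k + 1), i < j → E (v i) (v j)

/-- `E` is an orientation of the graph `G`. -/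
def IsOrientation (G : SimpleGraph V) (E : V → V → Prop) : Prop :=
  ∀ x y : V, G.Adj x y ↔ (E x y ∨ E y x)

/-- The word `W` covers the set `A` of non-edges of the digraph `E` orienting `G`:
`W` is `k`-uniform for some `k`; its initial permutation is a topological sort of `E`
(first occurrences respect reachability); `G` is a subgraph of the graph represented
by `W`; and every pair in `A` is a non-edge of the graph represented by `W`. -/
def Covers [DecidableEq V] (W : List V) (G : SimpleGraph V) (E : V → V → Prop)
    (A : Set (V × V)) : Prop :=
  (∃ k : ℕ, Uniform W k) ∧
  (∀ u v : V, Relation.TransGen E u v → W.idxOf u < W.idxOf v) ∧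
  (∀ x y : V, G.Adj x y → Alternate W x y) ∧
  ∀ p ∈ A, ¬ Alternate W p.1 p.2

/-- `G` is representable by a concatenation of `k` permutations of its vertex set. -/
def PermutationallyRepresentable [DecidableEq V] (G : SimpleGraph V) (k : ℕ) : Prop :=
  ∃ Ps : List (List V), Ps.length = k ∧
    (∀ P ∈ Ps, P.Nodup ∧ ∀ x : V, x ∈ P) ∧
    Represents Ps.flatten G

/-!
In a `k`-uniform word in which `x` and `y` alternate and `x` occurs first, the subword on
`{x, y}` is `xyxy⋯xy`: it starts with `x` and, having as many `x`s as `y`s, ends with `y`.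
If `x` also occurs first in `W₂`, the subword of `W₁W₂` on `{x, y}` is `xy⋯xy xy⋯`, so
`x` and `y` still alternate. Every edge of `G` is oriented by `E`, so its endpoints occur
in the same order in both initial permutations. Non-alternation in either factor persists in
the concatenation, and the initial permutation of `W₁W₂` is that of `W₁` unless `W₁` is empty.
-/

section Words

variable [DecidableEq V]

theorem Uniform.append {W₁ W₂ : List V} {k₁ k₂ : ℕ} (h₁ : Uniform W₁ k₁) (h₂ : Uniform W₂ k₂) :
    Uniform (W₁ ++ W₂) (k₁ + k₂) := fun x => by
  rw [List.count_append, h₁ x, h₂ x]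

theorem Uniform.eq_nil_or_forall_mem {W : List V} {k : ℕ} (h : Uniform W k) :
    W = [] ∨ ∀ x, x ∈ W := by
  rcases W with _ | ⟨a, W⟩
  · exact Or.inl rfl
  · refine Or.inr fun x => List.count_pos_iff.mp ?_
    rw [h x, ← h a, List.count_cons_self]
    omega

theorem Alternate.symm {W : List V} {x y : V} (h : Alternate W x y) : Alternate W y x := by
  have hfilter : (W.filter fun z => z = y ∨ z = x) = W.filter fun z => z = x ∨ z = y :=
    List.filter_congr fun z _ => by simp only [or_comm]
  unfold Alternate at *
  rwa [hfilter]

theorem alternate_append_iff {W₁ W₂ : List V} {x y : V} :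
    Alternate (W₁ ++ W₂) x y ↔ Alternate W₁ x y ∧ Alternate W₂ x y ∧
      ∀ a ∈ (W₁.filter fun z => z = x ∨ z = y).getLast?,
        ∀ b ∈ (W₂.filter fun z => z = x ∨ z = y).head?, a ≠ b := by
  unfold Alternate
  rw [List.filter_append]
  exact List.isChain_append

theorem count_eq_count_add_of_isChain_ne :
    ∀ {L : List V} {x y : V}, x ≠ y → (∀ z ∈ L, z = x ∨ z = y) → L.IsChain (· ≠ ·) →
      L.head? = some x → L.count x = L.count y + if L.getLast? = some x then 1 else 0
  | [], _, _, _, _, _, h => by simp at h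
  | [a], x, y, hxy, _, _, h => by
    obtain rfl : a = x := by simpa using h
    simp [hxy]
  | a :: b :: L, x, y, hxy, hmem, hchain, h => by
    obtain rfl : a = x := by simpa using h
    obtain ⟨hab, hchain⟩ := List.isChain_cons_cons.mp hchain
    obtain rfl : b = y := (hmem b (by simp)).resolve_left (Ne.symm hab)
    have hmem' : ∀ z ∈ b :: L, z = b ∨ z = a := fun z hz =>
      (hmem z (List.mem_cons_of_mem _ hz)).symm
    have ih := count_eq_count_add_of_isChain_ne hxy.symm hmem' hchain rfl
    have hlast : (b :: L).getLast? = some a ∨ (b :: L).getLast? = some b := by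
      rw [List.getLast?_eq_some_getLast (List.cons_ne_nil _ _)]
      simpa [eq_comm, or_comm] using hmem' _ (List.getLast_mem (List.cons_ne_nil b L))
    rw [List.getLast?_cons_cons, List.count_cons_self, List.count_cons_of_ne hxy] at *
    rcases hlast with hlast | hlast <;>
      simp only [hlast, hxy, hxy.symm, Option.some.injEq, ↓reduceIte, ne_eq, not_false_eq_true,
        List.count_cons_of_ne, List.count_cons_self, add_zero] at ih ⊢ <;> omega

theorem head?_filter_eq_of_idxOf_lt :
    ∀ {W : List V} {x y : V}, W.idxOf x < W.idxOf y →
      (W.filter fun z => z = x ∨ z = y).head? = some x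
  | [], _, _, h => by simp at h
  | a :: W, x, y, h => by
    by_cases hax : a = x
    · simp [hax]
    by_cases hay : a = y
    · simp [hay] at h
    rw [List.idxOf_cons_ne _ hax, List.idxOf_cons_ne _ hay] at h
    rw [List.filter_cons_of_neg (by simp [hax, hay])]
    exact head?_filter_eq_of_idxOf_lt (Nat.succ_lt_succ_iff.mp h)

theorem getLast?_filter_eq_of_alternate {W : List V} {k : ℕ} {x y : V} (hu : Uniform W k)
    (ha : Alternate W x y) (hi : W.idxOf x < W.idxOf y) :
    (W.filter fun z => z = x ∨ z = y).getLast? = some y := by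
  set F := W.filter fun z => z = x ∨ z = y
  have hxy : x ≠ y := by rintro rfl; exact lt_irrefl _ hi
  have hmem : ∀ z ∈ F, z = x ∨ z = y := fun z hz => by simpa using List.of_mem_filter hz
  have hhead : F.head? = some x := head?_filter_eq_of_idxOf_lt hi
  have hcount (z : V) (hz : z = x ∨ z = y) : F.count z = k := by
    rw [List.count_filter (by simpa using hz), hu z]
  have hne : F ≠ [] := by rintro h; simp [h] at hhead
  have hbal := count_eq_count_add_of_isChain_ne hxy hmem ha hhead
  rw [hcount x (.inl rfl), hcount y (.inr rfl), List.getLast?_eq_some_getLast hne] at hbal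
  rw [List.getLast?_eq_some_getLast hne]
  rcases hmem _ (List.getLast_mem hne) with h | h
  · simp [h] at hbal
  · rw [h]

theorem Alternate.append {W₁ W₂ : List V} {k : ℕ} {x y : V} (hu : Uniform W₁ k)
    (ha₁ : Alternate W₁ x y) (ha₂ : Alternate W₂ x y)
    (hi₁ : W₁.idxOf x < W₁.idxOf y) (hi₂ : W₂.idxOf x < W₂.idxOf y) :
    Alternate (W₁ ++ W₂) x y := by
  refine alternate_append_iff.mpr ⟨ha₁, ha₂, fun a ha b hb => ?_⟩
  rw [getLast?_filter_eq_of_alternate hu ha₁ hi₁, Option.mem_some_iff] at ha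
  rw [head?_filter_eq_of_idxOf_lt hi₂, Option.mem_some_iff] at hb
  rintro rfl
  exact lt_irrefl _ (ha ▸ hb ▸ hi₁)

end Words

theorem stmt_0_general {V : Type*} [DecidableEq V] (G : SimpleGraph V)
    (E : V → V → Prop) (hor : IsOrientation G E)
    (A B : Set (V × V))
    (W₁ W₂ : List V) (h₁ : Covers W₁ G E A) (h₂ : Covers W₂ G E B) :
    Covers (W₁ ++ W₂) G E (A ∪ B) := by
  obtain ⟨⟨k₁, hu₁⟩, hi₁, he₁, hn₁⟩ := h₁
  obtain ⟨⟨k₂, hu₂⟩, hi₂, he₂, hn₂⟩ := h₂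
  refine ⟨⟨k₁ + k₂, hu₁.append hu₂⟩, fun u v huv => ?_, fun x y hxy => ?_, ?_⟩
  · rcases hu₁.eq_nil_or_forall_mem with rfl | hmem
    · exact hi₂ u v huv
    · rw [List.idxOf_append_of_mem (hmem u), List.idxOf_append_of_mem (hmem v)]
      exact hi₁ u v huv
  · rcases (hor x y).mp hxy with hE | hE
    · exact (he₁ x y hxy).append hu₁ (he₂ x y hxy) (hi₁ x y (.single hE)) (hi₂ x y (.single hE))
    · exact ((he₁ x y hxy).symm.append hu₁ (he₂ x y hxy).symm
        (hi₁ y x (.single hE)) (hi₂ y x (.single hE))).symm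
  · rintro p (hp | hp) halt
    · exact hn₁ p hp (alternate_append_iff.mp halt).1
    · exact hn₂ p hp (alternate_append_iff.mp halt).2.1

/-- If words `W₁` and `W₂` cover sets `A` and `B` of non-edges of an
acyclic digraph `D` respectively, then `W₁W₂` covers `A ∪ B`. -/
theorem stmt_0 {V : Type*} [Fintype V] [DecidableEq V] (G : SimpleGraph V)
    (E : V → V → Prop) (hor : IsOrientation G E) (hac : Acyclic E)
    (A B : Set (V × V))
    (hA : ∀ p ∈ A, ¬ G.Adj p.1 p.2) (hB : ∀ p ∈ B, ¬ G.Adj p.1 p.2)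
    (W₁ W₂ : List V) (h₁ : Covers W₁ G E A) (h₂ : Covers W₂ G E B) :
    Covers (W₁ ++ W₂) G E (A ∪ B) :=
  stmt_0_general G E hor A B W₁ W₂ h₁ h₂
end

section
/- Let D = (V,E) be a semi-transitively oriented graph and v ∈ V. Then the set of non-edges of D incident with v can be covered by a 2-uniform word. -/
/-!
Sort the vertices other than `v` into five zones: the ancestors of `v` that are not
in-neighbours (`A`), the in-neighbours (`I`), the vertices unrelated to `v` (`C`), the
out-neighbours (`O`) and the descendants of `v` that are not out-neighbours (`B`). List each zone
in a fixed topological order and form the word `A I C A v O I v B C O B`. It is 2-uniform, and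
two letters alternate in it exactly when they lie in the same zone or their zones occupy
interleaved pairs of blocks. Hence `v` alternates with `I` and `O` but with nothing in `A`, `B`,
`C`, and everything else reduces to excluding a few pairs of zones: paths `I ⇝ A` and `B ⇝ O`,
which would break the topological order of first occurrences, and arcs `A → O`, `A → B`,
`I → B`, which would not alternate. In each case the zones give a path through `v` whose ends are
joined by an arc, and semi-transitivity then forces an arc between `v` and a vertex whose zone
forbids it; the remaining bad pairs contradict acyclicity.
-/

variable {V : Type*}

open Relation

namespace List

variable {α : Type*} [DecidableEq α] {x y : α}

theorem idxOf_lt_idxOf_iff_head?_filter (hxy : x ≠ y) (l : List α) :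
    l.idxOf x < l.idxOf y ↔ (l.filter fun z => z = x ∨ z = y).head? = some x := by
  induction l with
  | nil => simp
  | cons a l ih =>
    by_cases hax : a = x
    · subst hax
      simp [hxy]
    by_cases hay : a = y
    · subst hay
      simp [hax]
    · simp [hax, hay, ih]

theorem filter_eq_pair_or_pair {l : List α} (hl : l.Nodup) (hx : x ∈ l) (hy : y ∈ l)
    (hxy : x ≠ y) :
    l.filter (fun z => z = x ∨ z = y) = [x, y] ∨
      l.filter (fun z => z = y ∨ z = x) = [y, x] := by
  have hperm : l.filter (fun z => z = x ∨ z = y) ~ [x, y] :=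
    (perm_ext_iff_of_nodup (hl.filter _) (by simp [hxy])).2 fun z => by
      simp only [mem_filter, decide_eq_true_eq, mem_cons, not_mem_nil, or_false]
      exact ⟨fun h => h.2, fun h => ⟨by rcases h with rfl | rfl <;> assumption, h⟩⟩
  refine (perm_pair.1 hperm).imp id fun h => ?_
  rw [← h]
  exact filter_congr fun z _ => by simp [or_comm]

end List

section BlockWord

variable {α β κ : Type*} [DecidableEq κ]

def blockWord (L : List α) (f : α → κ) (blocks : List κ) : List α :=
  blocks.flatMap fun c => L.filter (f · = c)

-- `true` stands for the letter labelled `a`, taken to come first in the underlying list.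
def blockPattern (blocks : List κ) (a b : κ) : List Bool :=
  blockWord [true, false] (cond · a b) blocks

variable {L : List α} {f : α → κ} {blocks : List κ} {x y : α}

theorem filter_blockWord (p : α → Bool) :
    (blockWord L f blocks).filter p = blockWord (L.filter p) f blocks := by
  simp [blockWord, List.filter_flatMap, List.filter_filter, Bool.and_comm]

theorem blockWord_map (l : List β) (g : β → α) :
    blockWord (l.map g) f blocks = (blockWord l (f ∘ g) blocks).map g := by
  simp [blockWord, List.map_flatMap, List.filter_map, Function.comp_def]

theorem filter_blockWord_eq_map_blockPattern [DecidableEq α]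
    (h : L.filter (fun z => z = x ∨ z = y) = [x, y]) :
    (blockWord L f blocks).filter (fun z => z = x ∨ z = y) =
      (blockPattern blocks (f x) (f y)).map (cond · x y) := by
  rw [filter_blockWord, h, show [x, y] = [true, false].map (cond · x y) from rfl, blockWord_map]
  congr
  funext t
  cases t <;> rfl

theorem alternate_blockWord_iff [DecidableEq α] (hxy : x ≠ y)
    (h : L.filter (fun z => z = x ∨ z = y) = [x, y]) :
    Alternate (blockWord L f blocks) x y ↔
      (blockPattern blocks (f x) (f y)).IsChain (· ≠ ·) := by
  have hinj : Function.Injective (cond · x y) := by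
    intro s t; cases s <;> cases t <;> simp [hxy, hxy.symm]
  rw [Alternate, List.Chain', filter_blockWord_eq_map_blockPattern h, List.isChain_map]
  exact List.IsChain.iff fun s t => hinj.ne_iff

theorem idxOf_blockWord_lt_iff [DecidableEq α] (hxy : x ≠ y)
    (h : L.filter (fun z => z = x ∨ z = y) = [x, y]) :
    (blockWord L f blocks).idxOf x < (blockWord L f blocks).idxOf y ↔
      (blockPattern blocks (f x) (f y)).head? = some true := by
  rw [List.idxOf_lt_idxOf_iff_head?_filter hxy, filter_blockWord_eq_map_blockPattern h,
    List.head?_map]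
  rcases (blockPattern blocks (f x) (f y)).head? with _ | _ | _ <;> simp [hxy.symm]

theorem count_blockWord [DecidableEq α] (hL : L.Nodup) (hx : x ∈ L) :
    (blockWord L f blocks).count x = blocks.count (f x) := by
  induction blocks with
  | nil => rfl
  | cons c blocks ih =>
    simp only [blockWord, List.flatMap_cons, List.count_append, List.count_cons] at ih ⊢
    rw [ih]
    by_cases hc : f x = c
    · simp [hc, List.count_eq_one_of_mem hL hx, add_comm]
    · simp [List.count_eq_zero, hc, Ne.symm hc]

end BlockWord

theorem Relation.TransGen.exists_isChain {α : Type*} {r : α → α → Prop} {a b : α}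
    (h : TransGen r a b) : ∃ l, (a :: l ++ [b]).IsChain r := by
  induction h with
  | single hab => exact ⟨[], by simpa using hab⟩
  | @tail b c _ hbc ih =>
    obtain ⟨l, hl⟩ := ih
    refine ⟨l ++ [b], ?_⟩
    simpa [List.isChain_append_cons_cons, hbc] using hl

section Digraphs

variable {E : V → V → Prop}

theorem Acyclic.ne_of_transGen (h : Acyclic E) {x y : V} (hxy : TransGen E x y) : x ≠ y := by
  rintro rfl
  exact h x hxy

theorem SemiTransitive.pairwise_of_isChain (hst : SemiTransitive E) {a b : V} {l : List V}
    (hl : (a :: l ++ [b]).IsChain E) (hab : E a b) : (a :: l ++ [b]).Pairwise E := by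
  have hlen : (a :: l ++ [b]).length = l.length + 1 + 1 := by simp
  have key := hst.2 (l.length + 1) (fun i => (a :: l ++ [b])[i.val]'(by omega))
    (fun i => List.isChain_iff_getElem.1 hl i (by omega))
    (by simpa using hab)
  rw [List.pairwise_iff_getElem]
  intro i j hi hj hij
  exact key ⟨i, by omega⟩ ⟨j, by omega⟩ hij

theorem SemiTransitive.arc_of_transGen_of_transGen (hst : SemiTransitive E) {x y z : V}
    (hxz : E x z) (hxy : TransGen E x y) (hyz : TransGen E y z) : E x y ∧ E y z := by
  obtain ⟨l₁, h₁⟩ := hxy.exists_isChain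
  obtain ⟨l₂, h₂⟩ := hyz.exists_isChain
  have hP : (x :: (l₁ ++ y :: l₂) ++ [z]).IsChain E := by
    simpa using List.isChain_split.2 ⟨h₁, h₂⟩
  have hpw := hst.pairwise_of_isChain hP hxz
  rw [List.pairwise_append, List.pairwise_cons] at hpw
  exact ⟨hpw.1.1 y (by simp), hpw.2.2 y (by simp) z (by simp)⟩

theorem Acyclic.exists_topological_list [Fintype V] (h : Acyclic E) :
    ∃ L : List V, L.Nodup ∧ (∀ x, x ∈ L) ∧ L.Pairwise fun a b => ¬ TransGen E b a := by
  classical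
  let depth : V → ℕ := fun x => (Finset.univ.filter (TransGen E · x)).card
  have depth_lt {a b : V} (hab : TransGen E a b) : depth a < depth b := by
    refine Finset.card_lt_card ((Finset.ssubset_iff_of_subset ?_).2 ⟨a, ?_⟩)
    · intro c; simpa using fun hca => hca.trans hab
    · simpa using ⟨hab, h a⟩
  have hperm := List.mergeSort_perm Finset.univ.toList fun a b => depth a ≤ depth b
  refine ⟨_, hperm.nodup_iff.2 (Finset.nodup_toList _), fun x => hperm.mem_iff.2 (by simp), ?_⟩
  refine (List.pairwise_mergeSort (fun a b c hab hbc => ?_) (fun a b => ?_) _).imp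
    fun hab hba => ?_
  · simp only [decide_eq_true_eq] at *; omega
  · simpa using le_total _ _
  · exact lt_irrefl _ ((depth_lt hba).trans_le (by simpa using hab))

end Digraphs

inductive Zone
  | ancestor | inNbr | unrelated | self | outNbr | descendant
  deriving DecidableEq

namespace Zone

instance : Fintype Zone :=
  .ofList [ancestor, inNbr, unrelated, self, outNbr, descendant] fun a => by cases a <;> decide

abbrev IsBelow (a : Zone) : Prop := a = ancestor ∨ a = inNbr

abbrev IsAbove (a : Zone) : Prop := a = outNbr ∨ a = descendant

-- What transitivity and semi-transitivity force on the zones of the ends of a path `x ⇝ y`.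
abbrev PathCompat (a b : Zone) : Prop :=
  ((b = self ∨ b.IsBelow) → a.IsBelow) ∧ ((a = self ∨ a.IsAbove) → b.IsAbove) ∧
  (a = inNbr → b.IsBelow → b = inNbr) ∧ (b = outNbr → a.IsAbove → a = outNbr)

abbrev ArcCompat (a b : Zone) : Prop :=
  PathCompat a b ∧ (a.IsBelow → b.IsAbove → a = inNbr ∧ b = outNbr) ∧
  (a = self → b = outNbr) ∧ (b = self → a = inNbr)

def blocks : List Zone :=
  [ancestor, inNbr, unrelated, ancestor, self, outNbr, inNbr, self, descendant, unrelated,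
    outNbr, descendant]

theorem count_blocks : ∀ a, blocks.count a = 2 := by decide

theorem blockPattern_head?_of_pathCompat :
    ∀ a b, PathCompat a b → (blockPattern blocks a b).head? = some true := by decide

theorem isChain_blockPattern_of_arcCompat :
    ∀ a b, ArcCompat a b → (blockPattern blocks a b).IsChain (· ≠ ·) := by decide

theorem not_isChain_blockPattern_self : ∀ a, a ≠ inNbr → a ≠ self → a ≠ outNbr →
    ¬ (blockPattern blocks self a).IsChain (· ≠ ·) ∧
      ¬ (blockPattern blocks a self).IsChain (· ≠ ·) := by decide

end Zone

section Zones

variable {E : V → V → Prop} {v x y : V}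

open Classical in
noncomputable def zone (E : V → V → Prop) (v x : V) : Zone :=
  if x = v then .self else if E x v then .inNbr else if E v x then .outNbr
  else if TransGen E x v then .ancestor else if TransGen E v x then .descendant else .unrelated

theorem zone_eq_self_iff : zone E v x = .self ↔ x = v := by
  unfold zone; split_ifs <;> simp_all

theorem zone_self : zone E v v = .self := zone_eq_self_iff.2 rfl

theorem zone_eq_inNbr_iff (h : Acyclic E) : zone E v x = .inNbr ↔ E x v := by
  unfold zone; split_ifs with h₁ h₂ h₃ <;> simp_all
  exact fun hvv => h v (.single hvv)

theorem zone_eq_outNbr_iff (h : Acyclic E) : zone E v x = .outNbr ↔ E v x := by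
  unfold zone; split_ifs with h₁ h₂ h₃ <;> simp_all
  · exact fun hvv => h v (.single hvv)
  · exact fun hvx => h v (.tail (.single hvx) h₂)

theorem isBelow_zone_iff (h : Acyclic E) : (zone E v x).IsBelow ↔ TransGen E x v := by
  unfold zone; split_ifs with h₁ h₂ h₃ <;> simp_all [Zone.IsBelow]
  · exact h v
  · exact .single h₂
  · exact fun hxv => h v (.head h₃ hxv)

theorem isAbove_zone_iff (h : Acyclic E) : (zone E v x).IsAbove ↔ TransGen E v x := by
  unfold zone; split_ifs with h₁ h₂ h₃ h₄ <;> simp_all [Zone.IsAbove]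
  · exact h v
  · exact fun hvx => h v (.tail hvx h₂)
  · exact .single h₃
  · exact fun hvx => h x (h₄.trans hvx)

theorem pathCompat_zone (hst : SemiTransitive E) (hxy : TransGen E x y) :
    Zone.PathCompat (zone E v x) (zone E v y) := by
  simp only [Zone.PathCompat, zone_eq_self_iff, zone_eq_inNbr_iff hst.1,
    zone_eq_outNbr_iff hst.1, isBelow_zone_iff hst.1, isAbove_zone_iff hst.1]
  refine ⟨?_, ?_, fun hxv hyv => (hst.arc_of_transGen_of_transGen hxv hxy hyv).2,
    fun hvy hvx => (hst.arc_of_transGen_of_transGen hvy hvx hxy).1⟩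
  · rintro (rfl | hyv)
    exacts [hxy, hxy.trans hyv]
  · rintro (rfl | hvx)
    exacts [hxy, hvx.trans hxy]

theorem arcCompat_zone (hst : SemiTransitive E) (hxy : E x y) :
    Zone.ArcCompat (zone E v x) (zone E v y) := by
  refine ⟨pathCompat_zone hst (.single hxy), ?_⟩
  simp only [zone_eq_self_iff, zone_eq_inNbr_iff hst.1, zone_eq_outNbr_iff hst.1,
    isBelow_zone_iff hst.1, isAbove_zone_iff hst.1]
  refine ⟨fun hxv hvy => hst.arc_of_transGen_of_transGen hxy hxv hvy, ?_, ?_⟩ <;>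
    rintro rfl <;> exact hxy

end Zones

section Covering

variable [DecidableEq V] {E : V → V → Prop} {L : List V} {v x y : V}

theorem alternate_comm (W : List V) (x y : V) : Alternate W x y ↔ Alternate W y x := by
  simp only [Alternate, or_comm]

theorem filter_eq_pair_of_transGen (h : Acyclic E) (hL : L.Nodup) (hmem : ∀ x, x ∈ L)
    (htop : L.Pairwise fun a b => ¬ TransGen E b a) (hxy : TransGen E x y) :
    L.filter (fun z => z = x ∨ z = y) = [x, y] := by
  refine (L.filter_eq_pair_or_pair hL (hmem x) (hmem y) (h.ne_of_transGen hxy)).resolve_right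
    fun hyx => ?_
  have hsub := htop.sublist (hyx ▸ List.filter_sublist)
  exact List.pairwise_pair.1 hsub hxy

theorem idxOf_blockWord_zone_lt (hst : SemiTransitive E) (hL : L.Nodup) (hmem : ∀ x, x ∈ L)
    (htop : L.Pairwise fun a b => ¬ TransGen E b a) (hxy : TransGen E x y) :
    (blockWord L (zone E v) Zone.blocks).idxOf x < (blockWord L (zone E v) Zone.blocks).idxOf y :=
  (idxOf_blockWord_lt_iff (hst.1.ne_of_transGen hxy)
    (filter_eq_pair_of_transGen hst.1 hL hmem htop hxy)).2
      (Zone.blockPattern_head?_of_pathCompat _ _ (pathCompat_zone hst hxy))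

theorem alternate_blockWord_zone_of_arc (hst : SemiTransitive E) (hL : L.Nodup)
    (hmem : ∀ x, x ∈ L) (htop : L.Pairwise fun a b => ¬ TransGen E b a) (hxy : E x y) :
    Alternate (blockWord L (zone E v) Zone.blocks) x y :=
  (alternate_blockWord_iff (hst.1.ne_of_transGen (.single hxy))
    (filter_eq_pair_of_transGen hst.1 hL hmem htop (.single hxy))).2
      (Zone.isChain_blockPattern_of_arcCompat _ _ (arcCompat_zone hst hxy))

theorem not_alternate_blockWord_zone (h : Acyclic E) (hL : L.Nodup) (hmem : ∀ x, x ∈ L)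
    {u : V} (hne : u ≠ v) (hu : ¬ E u v) (hv : ¬ E v u) :
    ¬ Alternate (blockWord L (zone E v) Zone.blocks) v u := by
  have hpat := Zone.not_isChain_blockPattern_self (zone E v u) (mt (zone_eq_inNbr_iff h).1 hu)
    (mt zone_eq_self_iff.1 hne) (mt (zone_eq_outNbr_iff h).1 hv)
  rcases L.filter_eq_pair_or_pair hL (hmem v) (hmem u) hne.symm with hvu | huv
  · rw [alternate_blockWord_iff hne.symm hvu, zone_self]
    exact hpat.1
  · rw [alternate_comm, alternate_blockWord_iff hne huv, zone_self]
    exact hpat.2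

end Covering

/-- In a semi-transitively oriented graph, the non-edges incident with a
given vertex `v` can be covered by a 2-uniform word. -/
theorem stmt_1 {V : Type*} [Fintype V] [DecidableEq V] (G : SimpleGraph V)
    (E : V → V → Prop) (hor : IsOrientation G E) (hst : SemiTransitive E) (v : V) :
    ∃ W : List V, Uniform W 2 ∧
      Covers W G E {p : V × V | p.1 ≠ p.2 ∧ ¬ G.Adj p.1 p.2 ∧ (p.1 = v ∨ p.2 = v)} := by
  obtain ⟨L, hL, hmem, htop⟩ := hst.1.exists_topological_list
  have hW : Uniform (blockWord L (zone E v) Zone.blocks) 2 := fun x =>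
    (count_blockWord hL (hmem x)).trans (Zone.count_blocks _)
  refine ⟨_, hW, ⟨2, hW⟩, fun x y => idxOf_blockWord_zone_lt hst hL hmem htop,
    fun x y hadj => ?_, ?_⟩
  · rcases (hor x y).1 hadj with hxy | hyx
    · exact alternate_blockWord_zone_of_arc hst hL hmem htop hxy
    · exact (alternate_comm _ _ _).1 (alternate_blockWord_zone_of_arc hst hL hmem htop hyx)
  · rintro ⟨x, y⟩ ⟨hxy, hadj, rfl | rfl⟩ <;> rw [hor, not_or] at hadj
    · exact not_alternate_blockWord_zone hst.1 hL hmem hxy.symm hadj.2 hadj.1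
    · rw [alternate_comm]
      exact not_alternate_blockWord_zone hst.1 hL hmem hxy hadj.1 hadj.2
end

section
/- If a graph G is word-representable, then G admits a semi-transitive orientation. Specifically, orienting each edge {x,y} from x to y when the first occurrence of x precedes the first occurrence of y in a representing word yields a semi-transitive orientation. -/
variable {V : Type*}

/-!
An arc `x → y` of the orientation means that `x` and `y` alternate in `W` starting with `x`,
i.e. every prefix of `W` contains `y` at most as often as `x` and `x` at most once more than
`y`. Along a directed path `v 0 → ⋯ → v k` the prefix counts of the `v i` can only decrease,
and the arc `v 0 → v k` allows a total drop of at most one, so every pair `v i, v j` with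
`i < j` is balanced in this sense, hence alternates, hence is an arc. Acyclicity holds because
arcs increase the position of the first occurrence.
-/

theorem isOrientation_adj_and_lt {α : Type*} [LinearOrder α] {G : SimpleGraph V} {f : V → α}
    (hf : ∀ ⦃x y⦄, G.Adj x y → f x ≠ f y) :
    IsOrientation G (fun x y => G.Adj x y ∧ f x < f y) := by
  intro x y
  constructor
  · intro hxy
    rcases (hf hxy).lt_or_gt with hlt | hlt
    · exact .inl ⟨hxy, hlt⟩
    · exact .inr ⟨hxy.symm, hlt⟩
  · rintro (⟨hxy, -⟩ | ⟨hyx, -⟩)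
    exacts [hxy, hyx.symm]

theorem acyclic_of_lt {α : Type*} [Preorder α] {E : V → V → Prop} (f : V → α)
    (hf : ∀ ⦃x y⦄, E x y → f x < f y) : Acyclic E := by
  intro x hx
  have hlt : Relation.TransGen (· < ·) (f x) (f x) := Relation.TransGen.lift f hf x x hx
  rw [Relation.transGen_eq_self] at hlt
  exact lt_irrefl _ hlt

namespace List

variable [DecidableEq V]

def PrefixBalanced (L : List V) (x y : V) : Prop :=
  ∀ P, P <+: L → P.count y ≤ P.count x ∧ P.count x ≤ P.count y + 1

theorem prefixBalanced_nil (x y : V) : PrefixBalanced [] x y := by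
  intro P hP
  simp [prefix_nil.mp hP]

theorem prefixBalanced_cons_self {L : List V} {x y : V} (hxy : x ≠ y) :
    PrefixBalanced (x :: L) x y ↔ PrefixBalanced L y x := by
  constructor
  · intro h P hP
    have := h (x :: P) (prefix_cons_iff.2 (.inr ⟨P, rfl, hP⟩))
    rw [count_cons_self, count_cons_of_ne hxy] at this
    omega
  · intro h P hP
    rcases prefix_cons_iff.1 hP with rfl | ⟨Q, rfl, hQ⟩
    · simp
    · have := h Q hQ
      rw [count_cons_self, count_cons_of_ne hxy]
      omega

theorem not_prefixBalanced_cons {L : List V} {x y : V} (hxy : x ≠ y) :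
    ¬ PrefixBalanced (y :: L) x y := by
  intro h
  have := (h [y] (by simp)).1
  simp [hxy.symm] at this

theorem isChain_ne_and_head?_ne_iff_prefixBalanced {x y : V} (hxy : x ≠ y) :
    ∀ {L : List V}, (∀ z ∈ L, z = x ∨ z = y) →
      (L.IsChain (· ≠ ·) ∧ L.head? ≠ some y ↔ PrefixBalanced L x y) := by
  intro L
  induction L generalizing x y with
  | nil => simp [prefixBalanced_nil]
  | cons a L ih =>
    intro hL
    rcases hL a mem_cons_self with rfl | rfl
    · rw [prefixBalanced_cons_self hxy,
        ← ih hxy.symm fun z hz => (hL z (mem_cons_of_mem a hz)).symm, isChain_cons]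
      rcases L with _ | ⟨b, L⟩ <;> simp [hxy, ne_comm, and_comm]
    · simp [not_prefixBalanced_cons hxy]

theorem prefixBalanced_filter_iff {L : List V} {x y : V} {p : V → Bool}
    (hx : p x) (hy : p y) : PrefixBalanced (L.filter p) x y ↔ PrefixBalanced L x y := by
  simp only [PrefixBalanced, prefix_filter_iff, forall_exists_index, and_imp]
  constructor
  · intro h P hP
    simpa only [count_filter hx, count_filter hy] using h _ P hP rfl
  · rintro h _ P hP rfl
    simpa only [count_filter hx, count_filter hy] using h P hP

theorem head?_filter_eq_of_idxOf_lt {W : List V} {x y : V} (hx : x ∈ W)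
    (hlt : W.idxOf x < W.idxOf y) : (W.filter fun z => z = x ∨ z = y).head? = some x := by
  induction W with
  | nil => simp at hx
  | cons a W ih =>
    by_cases hax : a = x
    · simp [hax]
    have hay : a ≠ y := by
      rintro rfl
      simp [idxOf_cons_ne _ hax] at hlt
    rw [filter_cons_of_neg (by simp [hax, hay])]
    rw [idxOf_cons_ne _ hax, idxOf_cons_ne _ hay, Nat.succ_lt_succ_iff] at hlt
    exact ih ((mem_cons.mp hx).resolve_left (Ne.symm hax)) hlt

theorem alternate_iff_prefixBalanced {W : List V} {x y : V} (hx : x ∈ W)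
    (hlt : W.idxOf x < W.idxOf y) : Alternate W x y ↔ PrefixBalanced W x y := by
  have hxy : x ≠ y := by rintro rfl; exact hlt.false
  rw [Alternate, ← prefixBalanced_filter_iff (p := fun z => z = x ∨ z = y) (by simp) (by simp),
    ← isChain_ne_and_head?_ne_iff_prefixBalanced hxy (by simp),
    head?_filter_eq_of_idxOf_lt hx hlt]
  exact (and_iff_left (by simpa using hxy)).symm

theorem prefixBalanced_of_path {W : List V} {k : ℕ} {v : Fin (k + 1) → V}
    (hpath : ∀ i : Fin k, PrefixBalanced W (v i.castSucc) (v i.succ))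
    (hshortcut : PrefixBalanced W (v 0) (v (Fin.last k))) {i j : Fin (k + 1)} (hij : i ≤ j) :
    PrefixBalanced W (v i) (v j) := by
  intro P hP
  have hanti : Antitone fun i => P.count (v i) :=
    Fin.antitone_iff_succ_le.2 fun i => (hpath i P hP).1
  have h0i : P.count (v i) ≤ P.count (v 0) := hanti (Fin.zero_le i)
  have hjk : P.count (v (Fin.last k)) ≤ P.count (v j) := hanti (Fin.le_last j)
  have h0k := (hshortcut P hP).2
  exact ⟨hanti hij, by omega⟩

end List

theorem Represents.adj_iff_prefixBalanced [DecidableEq V] {G : SimpleGraph V}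
    {W : List V} (h : Represents W G) {x y : V} (hlt : W.idxOf x < W.idxOf y) :
    G.Adj x y ↔ W.PrefixBalanced x y := by
  rw [h.2 x y (by rintro rfl; exact hlt.false), List.alternate_iff_prefixBalanced (h.1 x) hlt]

theorem stmt_2_general {V : Type*} [DecidableEq V] (G : SimpleGraph V)
    (W : List V) (h : Represents W G) :
    IsOrientation G (fun x y => G.Adj x y ∧ W.idxOf x < W.idxOf y) ∧
    SemiTransitive (fun x y => G.Adj x y ∧ W.idxOf x < W.idxOf y) := by
  have hbal {x y : V} (hxy : G.Adj x y ∧ W.idxOf x < W.idxOf y) : W.PrefixBalanced x y :=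
    (h.adj_iff_prefixBalanced hxy.2).1 hxy.1
  refine ⟨isOrientation_adj_and_lt fun x y hxy hidx => hxy.ne ((List.idxOf_inj (h.1 x)).1 hidx),
    acyclic_of_lt W.idxOf fun _ _ hxy => hxy.2, ?_⟩
  intro k v hpath hshortcut i j hij
  have hidx : StrictMono fun i => W.idxOf (v i) :=
    Fin.strictMono_iff_lt_succ.2 fun i => (hpath i).2
  exact ⟨(h.adj_iff_prefixBalanced (hidx hij)).2
    (List.prefixBalanced_of_path (fun i => hbal (hpath i)) (hbal hshortcut) hij.le), hidx hij⟩

/-- If `W` represents `G`, then orienting each edge from the letter with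
earlier first occurrence yields a semi-transitive orientation of `G`. -/
theorem stmt_2 {V : Type*} [Fintype V] [DecidableEq V] (G : SimpleGraph V)
    (W : List V) (h : Represents W G) :
    IsOrientation G (fun x y => G.Adj x y ∧ W.idxOf x < W.idxOf y) ∧
    SemiTransitive (fun x y => G.Adj x y ∧ W.idxOf x < W.idxOf y) :=
  stmt_2_general G W h
end

section
/- A graph is word-representable if and only if it admits a semi-transitive orientation. -/
variable {V : Type*}

/-!
Say that `x` leads `y` in a word `W` if every prefix of `W` contains `x` as often as `y` or once
more; distinct letters alternate in `W` exactly when one leads the other. If `W` represents `G`,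
orienting each edge from the leading letter is semi-transitive: along a path `v₀ → ⋯ → v_k` the
prefix counts decrease, and the shortcut `v₀ → v_k` confines them to a window of width one, so
`v_i` leads `v_j` for all `i < j`.

Conversely, leading and non-leading both survive concatenation of uniform words. So for a
semi-transitive orientation it suffices to find, besides a topological sort, for each non-edge
`{u, v}` a uniform word in which every arc still leads but `u` and `v` do not alternate. If `u`
and `v` are incomparable, concatenate topological sorts of `E + (u → v)` and `E + (v → u)`. If
`u` reaches `v`, topologically sort the digraph on two copies of the vertices in which each arc
`x → y` becomes `x⁰ → y⁰ → x¹ → y¹`, together with the extra arc `u¹ → v⁰`, which yields the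
pattern `u u v v`; semi-transitivity is exactly what keeps this digraph acyclic, since a path
`v⁰ ⇝ u¹` would give a path from `u` through `v` bypassed by an arc.
-/

/-- For `x ≠ y`, this says that the subword of `W` on `{x, y}` is `x y x y ⋯`. -/
def Leads {α : Type*} [DecidableEq α] (W : List α) (x y : α) : Prop :=
  ∀ t, (W.take t).count y ≤ (W.take t).count x ∧ (W.take t).count x ≤ (W.take t).count y + 1

section Leads

variable {α : Type*} [DecidableEq α] {W A B : List α} {x y a : α}

theorem leads_nil : Leads [] x y := fun t => by simp

theorem leads_cons_self (hxy : x ≠ y) : Leads (x :: W) x y ↔ Leads W y x := by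
  constructor
  · intro h t
    have := h (t + 1)
    simp only [List.take_succ_cons, List.count_cons, hxy, beq_iff_eq, if_true, if_false] at this
    omega
  · rintro h (_ | t)
    · simp
    · have := h t
      simp only [List.take_succ_cons, List.count_cons, hxy, beq_iff_eq, if_true, if_false]
      omega

theorem not_leads_cons (hxy : x ≠ y) : ¬ Leads (y :: W) x y := fun h => by
  simpa [List.count_cons_of_ne hxy.symm] using (h 1).1

theorem leads_cons_of_ne (hx : a ≠ x) (hy : a ≠ y) : Leads (a :: W) x y ↔ Leads W x y := by
  constructor
  · intro h t
    simpa [List.count_cons_of_ne hx, List.count_cons_of_ne hy] using h (t + 1)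
  · rintro h (_ | t)
    · simp
    · simpa [List.count_cons_of_ne hx, List.count_cons_of_ne hy] using h t

theorem leads_filter_iff (p : α → Bool) (hxy : x ≠ y) (hx : p x) (hy : p y) :
    Leads (W.filter p) x y ↔ Leads W x y := by
  induction W generalizing x y with
  | nil => rfl
  | cons a W ih =>
    by_cases hax : a = x
    · subst hax
      rw [List.filter_cons_of_pos hx, leads_cons_self hxy, leads_cons_self hxy, ih hxy.symm hy hx]
    by_cases hay : a = y
    · subst hay
      rw [List.filter_cons_of_pos hy]
      exact iff_of_false (not_leads_cons hxy) (not_leads_cons hxy)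
    rw [leads_cons_of_ne hax hay, ← ih hxy hx hy, List.filter_cons]
    split
    · exact leads_cons_of_ne hax hay
    · rfl

theorem isChain_ne_iff_leads {l : List α} (hxy : x ≠ y) (hl : ∀ z ∈ l, z = x ∨ z = y) :
    l.IsChain (· ≠ ·) ↔ Leads l x y ∨ Leads l y x := by
  induction l generalizing x y with
  | nil => simp [leads_nil]
  | cons a l ih =>
    wlog hax : a = x generalizing x y
    · rw [or_comm]
      exact this hxy.symm (fun z hz => (hl z hz).symm)
        ((hl a List.mem_cons_self).resolve_left hax)
    subst hax
    rw [leads_cons_self hxy, iff_false_intro (not_leads_cons hxy.symm), or_false]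
    cases l with
    | nil => simp [leads_nil]
    | cons b l =>
      rw [List.isChain_cons_cons, ih hxy fun z hz => hl z (List.mem_cons_of_mem _ hz)]
      rcases hl b (by simp) with rfl | rfl
      · simp [not_leads_cons hxy.symm]
      · simp [hxy, not_leads_cons hxy]

theorem alternate_iff_leads (hxy : x ≠ y) :
    Alternate W x y ↔ Leads W x y ∨ Leads W y x := by
  rw [Alternate, List.Chain', isChain_ne_iff_leads hxy (by simp),
    leads_filter_iff _ hxy (by simp) (by simp), leads_filter_iff _ hxy.symm (by simp) (by simp)]

theorem Leads.mem_take (h : Leads W x y) {t : ℕ} (hy : y ∈ W.take t) : x ∈ W.take t :=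
  List.count_pos_iff.1 ((List.count_pos_iff.2 hy).trans_le (h t).1)

theorem Leads.idxOf_lt (h : Leads W x y) (hxy : x ≠ y) (hy : y ∈ W) :
    W.idxOf x < W.idxOf y := by
  have hx := h.mem_take ((List.mem_take_iff_idxOf_lt hy).2 (Nat.lt_succ_self _))
  have hxW := List.mem_of_mem_take hx
  have hle := (List.mem_take_iff_idxOf_lt hxW).1 hx
  have hne : W.idxOf x ≠ W.idxOf y := fun e => hxy ((List.idxOf_inj hxW).1 e)
  omega

theorem leads_append_iff (hA : A.count x = A.count y) :
    Leads (A ++ B) x y ↔ Leads A x y ∧ Leads B x y := by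
  simp only [Leads, List.take_append, List.count_append]
  constructor
  · intro h
    refine ⟨fun t => ?_, fun t => ?_⟩
    · rcases le_total t A.length with ht | ht
      · simpa [ht] using h t
      · simpa [List.take_of_length_le ht] using h A.length
    · have := h (A.length + t)
      simp only [List.take_of_length_le (Nat.le_add_right _ t), Nat.add_sub_cancel_left, hA] at this
      omega
  · rintro ⟨hA', hB⟩ t
    rcases le_total t A.length with ht | ht
    · simpa [ht] using hA' t
    · have := hB (t - A.length)
      simp only [List.take_of_length_le ht, hA]
      omega

theorem leads_flatten_iff {Ws : List (List α)} (h : ∀ P ∈ Ws, P.count x = P.count y) :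
    Leads Ws.flatten x y ↔ ∀ P ∈ Ws, Leads P x y := by
  induction Ws with
  | nil => simp [leads_nil]
  | cons P Ws ih =>
    rw [List.flatten_cons, leads_append_iff (h P List.mem_cons_self),
      ih fun Q hQ => h Q (List.mem_cons_of_mem _ hQ), List.forall_mem_cons]

end Leads

section Orientation

variable {α : Type*} {E : α → α → Prop}

theorem acyclic_of_lt_s4 {β : Type*} [Preorder β] (f : α → β) (h : ∀ a b, E a b → f a < f b) :
    Acyclic E := by
  have hlt : ∀ a b, Relation.TransGen E a b → f a < f b := by
    intro a b hab
    induction hab with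
    | single hab => exact h _ _ hab
    | tail _ hbc ih => exact ih.trans (h _ _ hbc)
  exact fun a ha => lt_irrefl _ (hlt a a ha)

variable [DecidableEq α]

def wordOrientation (W : List α) (x y : α) : Prop :=
  x ≠ y ∧ Leads W x y

theorem isOrientation_wordOrientation {W : List α} {G : SimpleGraph α} (hW : Represents W G) :
    IsOrientation G (wordOrientation W) := by
  intro x y
  by_cases hxy : x = y
  · subst hxy
    simp [wordOrientation]
  · rw [hW.2 x y hxy, alternate_iff_leads hxy]
    simp [wordOrientation, hxy, Ne.symm hxy]

theorem semiTransitive_wordOrientation {W : List α} (hW : ∀ x, x ∈ W) :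
    SemiTransitive (wordOrientation W) := by
  have hidx : ∀ {x y}, wordOrientation W x y → W.idxOf x < W.idxOf y :=
    fun h => h.2.idxOf_lt h.1 (hW _)
  refine ⟨acyclic_of_lt_s4 (W.idxOf ·) fun _ _ => hidx, fun k v hpath hshort i j hij => ?_⟩
  have hmono : StrictMono fun i => W.idxOf (v i) :=
    Fin.strictMono_iff_lt_succ.2 fun i => hidx (hpath i)
  refine ⟨fun h => (hmono hij).ne (congrArg W.idxOf h), fun t => ?_⟩
  have hanti : Antitone fun i => (W.take t).count (v i) :=
    Fin.antitone_iff_succ_le.2 fun i => ((hpath i).2 t).1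
  have h0i := hanti (Fin.zero_le i)
  have hij' := hanti hij.le
  have hjk := hanti (Fin.le_last j)
  have hshort' := (hshort.2 t).2
  beta_reduce at h0i hij' hjk
  exact ⟨hij', by omega⟩

theorem WordRepresentable.exists_semiTransitive {G : SimpleGraph α} (h : WordRepresentable G) :
    ∃ E : α → α → Prop, IsOrientation G E ∧ SemiTransitive E :=
  let ⟨_, hW⟩ := h
  ⟨_, isOrientation_wordOrientation hW, semiTransitive_wordOrientation hW.1⟩

end Orientation

section TopologicalSort

variable {α : Type*} {E : α → α → Prop}

def IsTopologicalSort (E : α → α → Prop) (L : List α) : Prop :=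
  L.Nodup ∧ (∀ a, a ∈ L) ∧ L.Pairwise fun a b => ¬ E b a

theorem exists_isTopologicalSort [Fintype α] (hE : Acyclic E) :
    ∃ L, IsTopologicalSort E L := by
  classical
  have : IsPartialOrder α (Relation.ReflTransGen E) :=
    { refl := fun _ => .refl
      trans := fun _ _ _ => .trans
      antisymm := fun a b hab hba => by
        by_contra hne
        rcases Relation.reflTransGen_iff_eq_or_transGen.1 hab with rfl | hab
        · exact hne rfl
        · exact hE a (hab.trans_left hba) }
  obtain ⟨s, hs, hle⟩ := extend_partialOrder (Relation.ReflTransGen E)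
  refine ⟨Finset.univ.sort s, Finset.sort_nodup _ _, fun a => by simp [Finset.mem_sort], ?_⟩
  exact ((Finset.sort_nodup _ _).and (Finset.pairwise_sort _ _)).imp fun ⟨hne, hab⟩ hba =>
    hne (antisymm hab (hle _ _ (.single hba)))

variable {L : List α} {a b : α}

theorem IsTopologicalSort.mem_take (hL : IsTopologicalSort E L) (hab : E a b) {t : ℕ}
    (hb : b ∈ L.take t) : a ∈ L.take t := by
  have hL' := hL.2.2
  rw [← List.take_append_drop t L, List.pairwise_append] at hL'
  by_contra ha
  have := hL.2.1 a
  rw [← List.take_append_drop t L, List.mem_append] at this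
  exact hL'.2.2 b hb a (this.resolve_left ha) hab

theorem IsTopologicalSort.exists_take (hL : IsTopologicalSort E L) (hab : E a b) (hne : a ≠ b) :
    ∃ t, a ∈ L.take t ∧ b ∉ L.take t := by
  obtain ⟨s, s', hs⟩ := List.append_of_mem (hL.2.1 a)
  have hpw := hL.2.2
  rw [hs, List.pairwise_append] at hpw
  have htake : L.take (s.length + 1) = s ++ [a] := by
    simp [hs, List.take_append, List.take_of_length_le (Nat.le_succ _)]
  refine ⟨s.length + 1, by simp [htake], fun hb => ?_⟩
  rw [htake, List.mem_append, List.mem_singleton] at hb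
  rcases hb with hb | rfl
  · exact hpw.2.2 b hb a List.mem_cons_self hab
  · exact hne rfl

theorem IsTopologicalSort.uniform [DecidableEq α] (hL : IsTopologicalSort E L) : Uniform L 1 :=
  fun a => hL.1.count.trans (if_pos (hL.2.1 a))

theorem IsTopologicalSort.leads [DecidableEq α] (hL : IsTopologicalSort E L) (hab : E a b) :
    Leads L a b := fun t => by
  have hnd := hL.1.sublist (List.take_sublist t L)
  have := hL.mem_take hab (t := t)
  rw [hnd.count, hnd.count]
  split_ifs <;> simp_all

theorem IsTopologicalSort.not_leads [DecidableEq α] (hL : IsTopologicalSort E L) (hab : E a b)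
    (hne : a ≠ b) : ¬ Leads L b a := fun h =>
  let ⟨_, ha, hb⟩ := hL.exists_take hab hne
  hb (h.mem_take ha)

theorem Acyclic.sup_arc (hE : Acyclic E) (hba : ¬ Relation.ReflTransGen E b a) :
    Acyclic fun x y => E x y ∨ x = a ∧ y = b := by
  have key : ∀ {x y}, Relation.TransGen (fun x y => E x y ∨ x = a ∧ y = b) x y →
      Relation.TransGen E x y ∨ Relation.ReflTransGen E x a ∧ Relation.ReflTransGen E b y := by
    intro x y h
    induction h with
    | single h =>
      rcases h with h | ⟨rfl, rfl⟩
      · exact .inl (.single h)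
      · exact .inr ⟨.refl, .refl⟩
    | tail _ hcd ih =>
      rcases hcd with h | ⟨rfl, rfl⟩ <;> rcases ih with ih | ⟨h₁, h₂⟩
      · exact .inl (ih.tail h)
      · exact .inr ⟨h₁, h₂.tail h⟩
      · exact .inr ⟨ih.to_reflTransGen, .refl⟩
      · exact absurd h₂ hba
  intro x hx
  rcases key hx with h | ⟨h₁, h₂⟩
  exacts [hE x h, hba (h₂.trans h₁)]

end TopologicalSort

section SemiTransitive

variable {α : Type*} {E : α → α → Prop}

theorem SemiTransitive.pairwise (hE : SemiTransitive E) {p : List α} (hp : p.IsChain E)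
    (hend : ∀ a ∈ p.head?, ∀ b ∈ p.getLast?, E a b) : p.Pairwise E := by
  rcases p with _ | ⟨a, l⟩
  · exact .nil
  rw [List.pairwise_iff_getElem]
  intro i j hi hj hij
  refine hE.2 l.length (fun i => (a :: l)[i.1]) (fun i => List.isChain_iff_getElem.1 hp i (by simp))
    (hend _ rfl _ ?_) ⟨i, hi⟩ ⟨j, hj⟩ hij
  simp [List.getLast?_eq_getElem?]

theorem SemiTransitive.shortcut (hE : SemiTransitive E) {z u v w : α}
    (hzu : Relation.ReflTransGen E z u) (huv : Relation.TransGen E u v)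
    (hvw : Relation.ReflTransGen E v w) (hzw : E z w) : E u v := by
  obtain ⟨l₁, hc₁, hl₁⟩ := List.exists_isChain_cons_of_relationReflTransGen hzu
  obtain ⟨c, huc, hcv⟩ := Relation.TransGen.head'_iff.1 huv
  obtain ⟨l₂, hc₂, hl₂⟩ := List.exists_isChain_cons_of_relationReflTransGen hcv
  obtain ⟨l₃, hc₃, hl₃⟩ := List.exists_isChain_cons_of_relationReflTransGen hvw
  have h₁ := hl₁ ▸ List.getLast?_eq_some_getLast (List.cons_ne_nil z l₁)
  have h₂ := hl₂ ▸ List.getLast?_eq_some_getLast (List.cons_ne_nil c l₂)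
  have h₃ := hl₃ ▸ List.getLast?_eq_some_getLast (List.cons_ne_nil v l₃)
  rw [List.getLast?_cons] at h₃
  have hchain : ((z :: l₁) ++ ((c :: l₂) ++ l₃)).IsChain E := by
    refine hc₁.append (hc₂.append hc₃.tail ?_) ?_
    · simp only [h₂, Option.mem_def, Option.some.injEq]
      rintro _ rfl _ hy
      exact hc₃.rel_head? hy
    · simp [h₁, huc]
  have hend : ∀ a ∈ ((z :: l₁) ++ ((c :: l₂) ++ l₃)).head?,
      ∀ b ∈ ((z :: l₁) ++ ((c :: l₂) ++ l₃)).getLast?, E a b := by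
    rw [List.getLast?_append, List.getLast?_append, h₂]
    cases h : l₃.getLast? <;> simp_all
  exact (List.pairwise_append.1 (hE.pairwise hchain hend)).2.2 u (hl₁ ▸ List.getLast_mem _) v
    (List.mem_append_left _ (hl₂ ▸ List.getLast_mem _))

end SemiTransitive

section Doubled

variable {α : Type*} {E : α → α → Prop}

/-- `(a, false)` and `(a, true)` are the early and late copies `a⁰`, `a¹` of `a`. Read through
`Prod.fst`, a topological sort of this digraph is a 2-uniform word in which every arc `a → b`
shows the pattern `a b a b`. -/
inductive Doubled (E : α → α → Prop) : α × Bool → α × Bool → Prop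
  | copy (a : α) : Doubled E (a, false) (a, true)
  | low {a b : α} : E a b → Doubled E (a, false) (b, false)
  | cross {a b : α} : E a b → Doubled E (b, false) (a, true)
  | high {a b : α} : E a b → Doubled E (a, true) (b, true)

/-- A path from an early copy to a late one runs along early copies up to `c`, then steps to the
late copy of `c` or of an in-neighbour `d` of `c`, then runs along late copies. -/
def DoubledReach (E : α → α → Prop) : α × Bool → α × Bool → Prop
  | (a, false), (b, false) => Relation.TransGen E a b
  | (a, true), (b, true) => Relation.TransGen E a b
  | (_, true), (_, false) => False
  | (a, false), (b, true) =>
    ∃ c d, Relation.ReflTransGen E a c ∧ (d = c ∨ E d c) ∧ Relation.ReflTransGen E d b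

theorem doubledReach_of_transGen {p q : α × Bool} (h : Relation.TransGen (Doubled E) p q) :
    DoubledReach E p q := by
  induction h with
  | single h =>
    cases h with
    | copy a => exact ⟨a, a, .refl, .inl rfl, .refl⟩
    | low h => exact .single h
    | cross h => exact ⟨_, _, .refl, .inr h, .refl⟩
    | high h => exact .single h
  | tail _ h ih =>
    obtain ⟨a, _ | _⟩ := p <;> rcases h with b | h | h | h
    · exact ⟨b, b, ih.to_reflTransGen, .inl rfl, .refl⟩
    · exact ih.tail h
    · exact ⟨_, _, ih.to_reflTransGen, .inr h, .refl⟩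
    · obtain ⟨c, d, hac, hdc, hd⟩ := ih
      exact ⟨c, d, hac, hdc, hd.tail h⟩
    iterate 3 exact ih.elim
    · exact ih.tail h

theorem Acyclic.doubled (hE : Acyclic E) : Acyclic (Doubled E) := by
  rintro ⟨a, _ | _⟩ h <;> exact hE a (doubledReach_of_transGen h)

theorem SemiTransitive.not_reflTransGen_doubled (hE : SemiTransitive E) {u v : α}
    (huv : Relation.TransGen E u v) (hnuv : ¬ E u v) :
    ¬ Relation.ReflTransGen (Doubled E) (v, false) (u, true) := by
  intro h
  obtain ⟨c, d, hvc, hdc, hdu⟩ :=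
    doubledReach_of_transGen ((Relation.reflTransGen_iff_eq_or_transGen.1 h).resolve_left (by simp))
  rcases hdc with rfl | hdc
  · exact hE.1 v (Relation.TransGen.trans_right (hvc.trans hdu) huv)
  · exact hnuv (hE.shortcut hdu huv hvc hdc)

end Doubled

section SeparatingWords

variable {α : Type*} [DecidableEq α] {E : α → α → Prop} {u v : α}

theorem count_map_fst (L : List (α × Bool)) (z : α) :
    (L.map Prod.fst).count z = L.count (z, false) + L.count (z, true) := by
  induction L with
  | nil => rfl
  | cons p L ih =>
    obtain ⟨a, _ | _⟩ := p <;> by_cases h : a = z <;> simp [ih, h] <;> omega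

theorem SemiTransitive.exists_separating_word_of_transGen [Fintype α] (hE : SemiTransitive E)
    (huv : Relation.TransGen E u v) (hnuv : ¬ E u v) :
    ∃ Q : List α, Uniform Q 2 ∧ (∀ x y, E x y → Leads Q x y) ∧ ¬ Leads Q u v ∧ ¬ Leads Q v u := by
  obtain ⟨L, hL⟩ :=
    exists_isTopologicalSort (hE.1.doubled.sup_arc (hE.not_reflTransGen_doubled huv hnuv))
  have hcount : ∀ t z, ((L.map Prod.fst).take t).count z =
      (if (z, false) ∈ L.take t then 1 else 0) + (if (z, true) ∈ L.take t then 1 else 0) := by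
    intro t z
    have hnd := hL.1.sublist (List.take_sublist t L)
    rw [← List.map_take, count_map_fst, hnd.count, hnd.count]
  have hmem : ∀ {p q} t, Doubled E p q → q ∈ L.take t → p ∈ L.take t :=
    fun _ h => hL.mem_take (.inl h)
  refine ⟨L.map Prod.fst, fun z => ?_, fun x y hxy t => ?_, ?_⟩
  · rw [count_map_fst, hL.1.count, hL.1.count, if_pos (hL.2.1 _), if_pos (hL.2.1 _)]
  · rw [hcount, hcount]
    have := hmem t (.low hxy)
    have := hmem t (.cross hxy)
    have := hmem t (.high hxy)
    split_ifs <;> simp_all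
  · obtain ⟨t, hu, hv⟩ := hL.exists_take (.inr ⟨rfl, rfl⟩) (by simp)
    have hu₀ := hmem t (.copy u) hu
    have hv₁ : (v, true) ∉ L.take t := fun h => hv (hmem t (.copy v) h)
    have cu := hcount t u
    have cv := hcount t v
    rw [if_pos hu₀, if_pos hu] at cu
    rw [if_neg hv, if_neg hv₁] at cv
    exact ⟨fun h => by have := (h t).2; omega, fun h => by have := (h t).1; omega⟩

theorem Acyclic.exists_separating_word [Fintype α] (hE : Acyclic E)
    (huv : ¬ Relation.ReflTransGen E u v) (hvu : ¬ Relation.ReflTransGen E v u) :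
    ∃ Q : List α, Uniform Q 2 ∧ (∀ x y, E x y → Leads Q x y) ∧ ¬ Leads Q u v ∧ ¬ Leads Q v u := by
  obtain ⟨L₁, h₁⟩ := exists_isTopologicalSort (hE.sup_arc hvu)
  obtain ⟨L₂, h₂⟩ := exists_isTopologicalSort (hE.sup_arc huv)
  have hne : u ≠ v := fun h => huv (h ▸ .refl)
  have hbal : ∀ x y, L₁.count x = L₁.count y := fun x y => by rw [h₁.uniform, h₁.uniform]
  refine ⟨L₁ ++ L₂, fun z => by rw [List.count_append, h₁.uniform, h₂.uniform],
    fun x y hxy => (leads_append_iff (hbal x y)).2 ⟨h₁.leads (.inl hxy), h₂.leads (.inl hxy)⟩,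
    fun h => h₂.not_leads (.inr ⟨rfl, rfl⟩) hne.symm ((leads_append_iff (hbal u v)).1 h).2,
    fun h => h₁.not_leads (.inr ⟨rfl, rfl⟩) hne ((leads_append_iff (hbal v u)).1 h).1⟩

theorem SemiTransitive.exists_separating_word [Fintype α] (hE : SemiTransitive E) (hne : u ≠ v)
    (huv : ¬ E u v) (hvu : ¬ E v u) :
    ∃ Q : List α, Uniform Q 2 ∧ (∀ x y, E x y → Leads Q x y) ∧ ¬ Leads Q u v ∧ ¬ Leads Q v u := by
  by_cases h₁ : Relation.TransGen E u v
  · exact hE.exists_separating_word_of_transGen h₁ huv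
  by_cases h₂ : Relation.TransGen E v u
  · obtain ⟨Q, hQ, hlead, hvu', huv'⟩ := hE.exists_separating_word_of_transGen h₂ hvu
    exact ⟨Q, hQ, hlead, huv', hvu'⟩
  refine hE.1.exists_separating_word (fun h => ?_) (fun h => ?_)
  · exact (Relation.reflTransGen_iff_eq_or_transGen.1 h).elim (fun e => hne e.symm) h₁
  · exact (Relation.reflTransGen_iff_eq_or_transGen.1 h).elim hne h₂

end SeparatingWords

theorem represents_flatten {α : Type*} [DecidableEq α] {G : SimpleGraph α} {E : α → α → Prop}
    {Ws : List (List α)} (hG : IsOrientation G E) (hbal : ∀ P ∈ Ws, ∀ x y, P.count x = P.count y)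
    (hcover : ∀ x, ∃ P ∈ Ws, x ∈ P) (hlead : ∀ P ∈ Ws, ∀ x y, E x y → Leads P x y)
    (hsep : ∀ x y, x ≠ y → ¬ G.Adj x y → ∃ P ∈ Ws, ¬ Leads P x y ∧ ¬ Leads P y x) :
    Represents Ws.flatten G := by
  refine ⟨fun x => List.mem_flatten.2 (hcover x), fun x y hxy => ?_⟩
  rw [alternate_iff_leads hxy, leads_flatten_iff fun P hP => hbal P hP x y,
    leads_flatten_iff fun P hP => hbal P hP y x]
  refine ⟨fun hadj => ?_, fun h => by_contra fun hadj => ?_⟩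
  · rcases (hG x y).1 hadj with e | e
    exacts [.inl fun P hP => hlead P hP _ _ e, .inr fun P hP => hlead P hP _ _ e]
  · obtain ⟨P, hP, hxy', hyx'⟩ := hsep x y hxy hadj
    rcases h with h | h
    exacts [hxy' (h P hP), hyx' (h P hP)]

theorem SemiTransitive.wordRepresentable {V : Type*} [Fintype V] [DecidableEq V]
    {G : SimpleGraph V} {E : V → V → Prop} (hE : SemiTransitive E) (hG : IsOrientation G E) :
    WordRepresentable G := by
  obtain ⟨P₀, hP₀⟩ := exists_isTopologicalSort hE.1
  have hpiece : ∀ p : V × V, ∃ Q : List V, (∃ k, Uniform Q k) ∧ (∀ x y, E x y → Leads Q x y) ∧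
      (p.1 ≠ p.2 → ¬ G.Adj p.1 p.2 → ¬ Leads Q p.1 p.2 ∧ ¬ Leads Q p.2 p.1) := by
    rintro ⟨u, v⟩
    by_cases h : u ≠ v ∧ ¬ G.Adj u v
    · obtain ⟨Q, hQ, hlead, hsep⟩ := hE.exists_separating_word h.1
        (fun e => h.2 ((hG u v).2 (.inl e))) (fun e => h.2 ((hG u v).2 (.inr e)))
      exact ⟨Q, ⟨2, hQ⟩, hlead, fun _ _ => hsep⟩
    · exact ⟨P₀, ⟨1, hP₀.uniform⟩, fun _ _ => hP₀.leads, fun h₁ h₂ => absurd ⟨h₁, h₂⟩ h⟩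
  choose Q hQ hlead hsep using hpiece
  refine ⟨(P₀ :: (Finset.univ : Finset (V × V)).toList.map Q).flatten, represents_flatten hG
    ?_ (fun x => ⟨P₀, List.mem_cons_self, hP₀.2.1 x⟩) ?_ fun x y hxy hadj =>
    ⟨Q (x, y), List.mem_cons_of_mem _ (List.mem_map.2 ⟨(x, y), by simp, rfl⟩), hsep _ hxy hadj⟩⟩
  · simp only [List.forall_mem_cons, List.forall_mem_map]
    refine ⟨fun x y => by rw [hP₀.uniform, hP₀.uniform], fun p _ x y => ?_⟩
    obtain ⟨k, hk⟩ := hQ p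
    rw [hk, hk]
  · simp only [List.forall_mem_cons, List.forall_mem_map]
    exact ⟨fun _ _ => hP₀.leads, fun p _ => hlead p⟩

/-- A graph is word-representable iff it admits a semi-transitive
orientation. -/
theorem stmt_4 {V : Type*} [Fintype V] [DecidableEq V] (G : SimpleGraph V) :
    WordRepresentable G ↔ ∃ E : V → V → Prop, IsOrientation G E ∧ SemiTransitive E :=
  ⟨WordRepresentable.exists_semiTransitive, fun ⟨_, hG, hE⟩ => hE.wordRepresentable hG⟩
end
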